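/- The only Riemann surface that strictly contains ℂ as a proper open subset (i.e., a connected Riemann surface admitting an open embedding of ℂ with nonempty complement of the image) and is obtained by adding at least one point is compact; equivalently, if a connected Riemann surface X contains an open subset biholomorphic to ℂ whose complement in X is nonempty and X minus that open set is finite, then X is biholomorphic to the Riemann sphere. -/

import Mathlib

/-!
Let `p` be a point of the complement and `φ` a chart at `p`. On a punctured disc around `φ p`
the map `f = e⁻¹ ∘ φ⁻¹` is a continuous right inverse of the holomorphic map `φ ∘ e`, hence
holomorphic, and it is injective. Injectivity rules out an essential singularity (by the open
mapping theorem `f` omits a ball near `φ p`, so `1 / (f - z₁)` is bounded), and a finite limit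
`a` would force `p = e a`. So `f` has a pole, it maps every punctured neighbourhood of `φ p` onto
a neighbourhood of `∞`, and therefore `e z → p` as `z → ∞`. Limits are unique in the Hausdorff
space `X`, so the complement is a single point `p`, and `X` is the union of the image of a large
closed disc and a compact neighbourhood of `p`.
-/

open Manifold Set Filter Topology Metric Bornology Function
open scoped Pointwise

theorem AnalyticAt.eventually_deriv_ne_zero {𝕜 E : Type*} [NontriviallyNormedField 𝕜]
    [CharZero 𝕜] [NormedAddCommGroup E] [NormedSpace 𝕜 E] [CompleteSpace E] {f : 𝕜 → E} {z : 𝕜}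
    (hf : AnalyticAt 𝕜 f z) (hnc : ¬∀ᶠ w in 𝓝 z, f w = f z) :
    ∀ᶠ w in 𝓝[≠] z, deriv f w ≠ 0 := by
  refine hf.deriv.eventually_eq_zero_or_eventually_ne_zero.resolve_left fun h0 ↦ hnc ?_
  have htop : analyticOrderAt (f · - f z) z = ⊤ := by
    rw [← hf.analyticOrderAt_deriv_add_one, analyticOrderAt_eq_top.2 h0, top_add]
  simpa only [sub_eq_zero] using analyticOrderAt_eq_top.1 htop

theorem not_eventually_eq_nhds {X : Type*} [TopologicalSpace X] {x : X} [(𝓝[≠] x).NeBot] :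
    ¬∀ᶠ y in 𝓝 x, y = x := fun h ↦
  ((eventually_nhdsWithin_of_eventually_nhds h).and
    (self_mem_nhdsWithin : {x}ᶜ ∈ 𝓝[≠] x)).exists.elim fun _ hy ↦ hy.2 hy.1

theorem differentiableOn_of_leftInvOn {h g : ℂ → ℂ} {U V : Set ℂ} (hU : IsOpen U)
    (hV : IsOpen V) (hh : DifferentiableOn ℂ h U) (hg : ContinuousOn g V) (hgUV : MapsTo g V U)
    (hhg : LeftInvOn h g V) : DifferentiableOn ℂ g V := by
  intro w₀ hw₀
  have hV₀ : V ∈ 𝓝 w₀ := hV.mem_nhds hw₀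
  have hg₀ : ContinuousAt g w₀ := hg.continuousAt hV₀
  have hhg₀ : ∀ᶠ w in 𝓝 w₀, h (g w) = w := eventually_of_mem hV₀ hhg
  have hnc : ¬∀ᶠ z in 𝓝 (g w₀), h z = h (g w₀) := fun hc ↦ not_eventually_eq_nhds <| by
    filter_upwards [hg₀.eventually hc, hhg₀] with w hw hw'
    rw [← hw', hw, hhg hw₀]
  have hderiv := (hh.analyticAt (hU.mem_nhds (hgUV hw₀))).eventually_deriv_ne_zero hnc
  have hg_ne : ∀ᶠ w in 𝓝[≠] w₀, g w ≠ g w₀ := by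
    filter_upwards [eventually_nhdsWithin_of_eventually_nhds hhg₀, self_mem_nhdsWithin]
      with w hw hne heq
    exact hne (show w = w₀ by rw [← hw, heq, hhg hw₀])
  have hgtend : Tendsto g (𝓝[≠] w₀) (𝓝[≠] (g w₀)) :=
    tendsto_nhdsWithin_iff.2 ⟨hg₀.tendsto.mono_left nhdsWithin_le_nhds, hg_ne⟩
  have hdiff : ∀ᶠ w in 𝓝[≠] w₀, DifferentiableAt ℂ g w := by
    filter_upwards [hgtend.eventually hderiv, mem_nhdsWithin_of_mem_nhds hV₀] with w hw hwV
    have hhw : HasDerivAt h (deriv h (g w)) (g w) :=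
      (hh.differentiableAt (hU.mem_nhds (hgUV hwV))).hasDerivAt
    exact (hhw.of_local_left_inverse (hg.continuousAt (hV.mem_nhds hwV)) hw
      (eventually_of_mem (hV.mem_nhds hwV) hhg)).differentiableAt
  exact (Complex.analyticAt_of_differentiable_on_punctured_nhds_of_continuousAt hdiff
    hg₀).differentiableAt.differentiableWithinAt

theorem AnalyticAt.nhds_le_map_nhds_of_injOn {f : ℂ → ℂ} {s : Set ℂ} {z : ℂ}
    (hf : AnalyticAt ℂ f z) (hinj : InjOn f s) (hs : s ∈ 𝓝 z) : 𝓝 (f z) ≤ map f (𝓝 z) :=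
  hf.eventually_constant_or_nhds_le_map_nhds.resolve_left fun hc ↦ not_eventually_eq_nhds <| by
    filter_upwards [hc, hs] with w hw hws using hinj hws (mem_of_mem_nhds hs) hw

theorem AnalyticAt.nhdsNE_le_map_nhdsNE {f : ℂ → ℂ} {z : ℂ} (hf : AnalyticAt ℂ f z)
    (hne : ∀ᶠ w in 𝓝[≠] z, f w ≠ f z) : 𝓝[≠] (f z) ≤ map f (𝓝[≠] z) := by
  have hopen : 𝓝 (f z) ≤ map f (𝓝 z) :=
    hf.eventually_constant_or_nhds_le_map_nhds.resolve_left fun hc ↦ by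
      obtain ⟨w, hw, hw'⟩ := ((eventually_nhdsWithin_of_eventually_nhds hc).and hne).exists
      exact hw' hw
  refine le_map fun s hs ↦ ?_
  have hs' : {w ∈ s | f w ≠ f z} ∈ 𝓝[≠] z := inter_mem hs hne
  have himg := hopen (image_mem_map (insert_mem_nhds_iff.2 hs'))
  rw [image_insert_eq] at himg
  exact mem_of_superset (insert_mem_nhds_iff.1 himg) (image_mono fun w hw ↦ hw.1)

theorem exists_ball_eventually_notMem_of_injOn {f : ℂ → ℂ} {s : Set ℂ} {c : ℂ} (hso : IsOpen s)
    (hs : s ∈ 𝓝[≠] c) (hf : DifferentiableOn ℂ f s) (hinj : InjOn f s) :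
    ∃ z₁, ∃ δ > 0, ∀ᶠ w in 𝓝[≠] c, f w ∉ ball z₁ δ := by
  obtain ⟨w₁, hw₁s, hw₁c⟩ := Filter.nonempty_of_mem (inter_mem hs self_mem_nhdsWithin)
  have hρ : 0 < dist w₁ c / 2 := half_pos (dist_pos.2 hw₁c)
  have ht : s ∩ (closedBall c (dist w₁ c / 2))ᶜ ∈ 𝓝 w₁ :=
    (hso.inter isClosed_closedBall.isOpen_compl).mem_nhds
      ⟨hw₁s, by simpa using half_lt_self (dist_pos.2 hw₁c)⟩
  have hsw₁ : s ∈ 𝓝 w₁ := hso.mem_nhds hw₁s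
  obtain ⟨δ, hδ, hball⟩ := Metric.mem_nhds_iff.1 <|
    (hf.analyticAt hsw₁).nhds_le_map_nhds_of_injOn hinj hsw₁ (image_mem_map ht)
  refine ⟨f w₁, δ, hδ, ?_⟩
  filter_upwards [hs, mem_nhdsWithin_of_mem_nhds (ball_mem_nhds c hρ)] with w hws hwρ hwδ
  obtain ⟨w', hw't, hw'w⟩ := hball hwδ
  rw [hinj hw't.1 hws hw'w] at hw't
  exact hw't.2 (ball_subset_closedBall hwρ)

theorem cobounded_le_map_nhdsNE_of_injOn {f : ℂ → ℂ} {s : Set ℂ} {c : ℂ} (hso : IsOpen s)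
    (hs : s ∈ 𝓝[≠] c) (hf : DifferentiableOn ℂ f s) (hinj : InjOn f s)
    (hlim : ∀ a, ¬Tendsto f (𝓝[≠] c) (𝓝 a)) : cobounded ℂ ≤ map f (𝓝[≠] c) := by
  obtain ⟨z₁, δ, hδ, hfar⟩ := exists_ball_eventually_notMem_of_injOn hso hs hf hinj
  set g : ℂ → ℂ := fun w ↦ (f w - z₁)⁻¹
  -- valid for every `w`, including `f w = z₁`, since `0⁻¹ = 0`
  have hfg : ∀ w, z₁ + (g w)⁻¹ = f w := fun w ↦ by simp [g]
  have hfz : ∀ᶠ w in 𝓝[≠] c, f w ≠ z₁ :=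
    hfar.mono fun w hw hwz ↦ hw (hwz ▸ mem_ball_self hδ)
  have hgd : ∀ᶠ w in 𝓝[≠] c, DifferentiableAt ℂ g w := by
    filter_upwards [hs, hfz] with w hws hwz
    exact ((hf.differentiableAt (hso.mem_nhds hws)).sub_const z₁).inv (sub_ne_zero.2 hwz)
  have hgb : IsBoundedUnder (· ≤ ·) (𝓝[≠] c) fun w ↦ ‖g w - g c‖ := by
    refine isBoundedUnder_of_eventually_le (a := δ⁻¹ + ‖g c‖) ?_
    filter_upwards [hfar] with w hw
    have hδw : δ ≤ ‖f w - z₁‖ := by simpa [dist_eq_norm] using hw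
    refine norm_sub_le_of_le ?_ le_rfl
    simpa only [g, norm_inv] using inv_anti₀ hδ hδw
  have hL := Complex.tendsto_limUnder_of_differentiable_on_punctured_nhds_of_bounded_under hgd hgb
  have hL0 : limUnder (𝓝[≠] c) g = 0 := by
    by_contra hL0
    exact hlim _ ((tendsto_const_nhds.add (hL.inv₀ hL0)).congr hfg)
  rw [hL0] at hL
  set G := update g c 0
  have hGc : G c = 0 := update_self _ _ _
  have hGg : ∀ w, w ≠ c → G w = g w := fun w hw ↦ update_of_ne hw _ _
  have hGd : ∀ᶠ w in 𝓝[≠] c, DifferentiableAt ℂ G w := by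
    filter_upwards [hgd, self_mem_nhdsWithin] with w hw hwc
    exact hw.congr_of_eventuallyEq ((eventually_ne_nhds hwc).mono hGg)
  have hGa : AnalyticAt ℂ G c :=
    Complex.analyticAt_of_differentiable_on_punctured_nhds_of_continuousAt hGd
      (continuousAt_update_same.2 hL)
  have hGne : ∀ᶠ w in 𝓝[≠] c, G w ≠ G c := by
    filter_upwards [hfz, self_mem_nhdsWithin] with w hw hwc
    rw [hGc, hGg w hwc]
    exact inv_ne_zero (sub_ne_zero.2 hw)
  have hfG : (fun w ↦ z₁ + (G w)⁻¹) =ᶠ[𝓝[≠] c] f := by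
    filter_upwards [self_mem_nhdsWithin] with w hwc
    rw [hGg w hwc, hfg]
  calc cobounded ℂ = map (z₁ + ·) (map (-z₁ + ·) (cobounded ℂ)) := by
        simp [map_map, comp_def]
    _ ≤ map (z₁ + ·) (map Inv.inv (𝓝[≠] (G c))) := by
        rw [hGc, Filter.map_inv, inv_nhdsNE_zero]
        exact map_mono (tendsto_const_add_cobounded _)
    _ ≤ map (z₁ + ·) (map Inv.inv (map G (𝓝[≠] c))) :=
        map_mono (map_mono (hGa.nhdsNE_le_map_nhdsNE hGne))
    _ = map f (𝓝[≠] c) := by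
        rw [map_map, map_map]
        exact map_congr hfG

theorem compactSpace_of_tendsto_cocompact {α X : Type*} [TopologicalSpace α] [TopologicalSpace X]
    [WeaklyLocallyCompactSpace X] {e : α → X} (he : Continuous e) {p : X}
    (hp : Tendsto e (cocompact α) (𝓝 p)) (hrange : (range e)ᶜ ⊆ {p}) : CompactSpace X := by
  obtain ⟨K, hK, hKp⟩ := exists_compact_mem_nhds p
  obtain ⟨C, hC, hCK⟩ := mem_cocompact.1 (hp hKp)
  refine isCompact_univ_iff.1 (((hC.image he).union hK).of_isClosed_subset isClosed_univ ?_)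
  rintro x -
  by_cases hx : x ∈ range e
  · obtain ⟨a, rfl⟩ := hx
    by_cases ha : a ∈ C
    · exact .inl (mem_image_of_mem e ha)
    · exact .inr (hCK ha)
  · exact .inr (hrange hx ▸ mem_of_mem_nhds hKp)

theorem tendsto_cobounded_of_range_mem_nhdsNE {X : Type*} [TopologicalSpace X] [T2Space X]
    [ChartedSpace ℂ X] [IsManifold 𝓘(ℂ, ℂ) 1 X] {e : ℂ → X} (he : IsOpenEmbedding e)
    (hhol : MDifferentiable 𝓘(ℂ, ℂ) 𝓘(ℂ, ℂ) e) {p : X} (hp : p ∉ range e)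
    (hiso : range e ∈ 𝓝[≠] p) : Tendsto e (cobounded ℂ) (𝓝 p) := by
  set φ := chartAt ℂ p
  set P := he.toOpenPartialHomeomorph e
  set V := φ.target ∩ φ.symm ⁻¹' range e
  set f := P.symm ∘ φ.symm
  have hVo : IsOpen V := φ.continuousOn_symm.isOpen_inter_preimage φ.open_target he.isOpen_range
  have hef : EqOn (e ∘ f) φ.symm V := fun w hw ↦ he.toOpenPartialHomeomorph_right_inv e hw.2
  have hφp : Tendsto φ.symm (𝓝[≠] (φ p)) (𝓝[≠] p) := by
    refine tendsto_nhdsWithin_iff.2 ⟨(φ.tendsto_symm (mem_chart_source ℂ p)).mono_left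
      nhdsWithin_le_nhds, ?_⟩
    filter_upwards [mem_nhdsWithin_of_mem_nhds (φ.open_target.mem_nhds (mem_chart_target ℂ p)),
      self_mem_nhdsWithin] with w hw hwc hwp
    exact hwc (show w = φ p by rw [← φ.right_inv hw, show φ.symm w = p from hwp])
  have hV : V ∈ 𝓝[≠] (φ p) := inter_mem
    (mem_nhdsWithin_of_mem_nhds (φ.open_target.mem_nhds (mem_chart_target ℂ p))) (hφp hiso)
  have hh : DifferentiableOn ℂ (φ ∘ e) (e ⁻¹' φ.source) := fun z hz ↦
    ((mdifferentiableAt_atlas (chart_mem_atlas ℂ p) hz).comp z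
      (hhol z)).differentiableAt.differentiableWithinAt
  have hfc : ContinuousOn f V := P.continuousOn_symm.comp
    (φ.continuousOn_symm.mono inter_subset_left) fun w hw ↦ by simpa [P] using hw.2
  have hfmaps : MapsTo f V (e ⁻¹' φ.source) := fun w hw ↦ by
    rw [mem_preimage, show e (f w) = φ.symm w from hef hw]
    exact φ.map_target hw.1
  have hleft : LeftInvOn (φ ∘ e) f V := fun w hw ↦ by
    rw [comp_apply, show e (f w) = φ.symm w from hef hw, φ.right_inv hw.1]
  have hfd : DifferentiableOn ℂ f V := differentiableOn_of_leftInvOn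
    (φ.open_source.preimage he.continuous) hVo hh hfc hfmaps hleft
  have hlim : ∀ a, ¬Tendsto f (𝓝[≠] (φ p)) (𝓝 a) := fun a ha ↦ hp ⟨a, tendsto_nhds_unique
    ((he.continuous.tendsto a).comp ha)
    ((hφp.mono_right nhdsWithin_le_nhds).congr' (eventuallyEq_of_mem hV hef).symm)⟩
  calc map e (cobounded ℂ)
      ≤ map e (map f (𝓝[≠] (φ p))) :=
        map_mono (cobounded_le_map_nhdsNE_of_injOn hVo hV hfd hleft.injOn hlim)
    _ = map φ.symm (𝓝[≠] (φ p)) := by rw [map_map]; exact map_congr (eventuallyEq_of_mem hV hef)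
    _ ≤ 𝓝 p := hφp.mono_right nhdsWithin_le_nhds

theorem stmt3_general {X : Type*} [TopologicalSpace X] [T2Space X] [ChartedSpace ℂ X]
    [IsManifold 𝓘(ℂ, ℂ) (⊤ : ℕ∞) X]
    (e : ℂ → X) (he : Topology.IsOpenEmbedding e)
    (hhol : MDifferentiable 𝓘(ℂ, ℂ) 𝓘(ℂ, ℂ) e)
    (hne : (Set.range e)ᶜ.Nonempty) (hfin : (Set.range e)ᶜ.Finite) :
    CompactSpace X ∧ ∃ p : X, (Set.range e)ᶜ = {p} := by
  obtain ⟨p, hp⟩ := hne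
  have hiso : ∀ q, range e ∈ 𝓝[≠] q := fun q ↦ by
    simpa using disjoint_principal_right.1 (mem_codiscrete.1 hfin.compl_mem_codiscrete q)
  have hlim : ∀ q ∈ (range e)ᶜ, Tendsto e (cobounded ℂ) (𝓝 q) := fun q hq ↦
    tendsto_cobounded_of_range_mem_nhdsNE he hhol hq (hiso q)
  have hsingle : (range e)ᶜ = {p} :=
    eq_singleton_iff_unique_mem.2 ⟨hp, fun q hq ↦ tendsto_nhds_unique (hlim q hq) (hlim p hp)⟩
  have := ChartedSpace.locallyCompactSpace ℂ X
  refine ⟨compactSpace_of_tendsto_cocompact he.continuous ?_ hsingle.subset, p, hsingle⟩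
  rw [← Metric.cobounded_eq_cocompact]
  exact hlim p hp

/-- If a connected Riemann surface `X` contains an open subset biholomorphic to `ℂ`
(via a holomorphic open embedding `e : ℂ → X`) whose complement in `X` is nonempty and
finite, then `X` is compact and the complement consists of exactly one point, i.e. `X`
is (biholomorphic to) the Riemann sphere `ℂ ∪ {∞}`. -/
theorem stmt3 {X : Type*} [TopologicalSpace X] [T2Space X] [ChartedSpace ℂ X]
    [IsManifold 𝓘(ℂ, ℂ) (⊤ : ℕ∞) X] [ConnectedSpace X]
    (e : ℂ → X) (he : Topology.IsOpenEmbedding e)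
    (hhol : MDifferentiable 𝓘(ℂ, ℂ) 𝓘(ℂ, ℂ) e)
    (hne : (Set.range e)ᶜ.Nonempty) (hfin : (Set.range e)ᶜ.Finite) :
    CompactSpace X ∧ ∃ p : X, (Set.range e)ᶜ = {p} :=
  stmt3_general e he hhol hne hfin
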